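/- arXiv:1706.05550 — 3 statements merged into one kernel-verified Lean document; each statement's English description precedes it below -/
import Mathlib

section
/- Let G be a finite simple connected graph and let k be a real number with 1 < k ≤ κ(G). If there exists a resolving function g : V(G) → [0,1] with Σ_{v ∈ V(G)} g(v) = dim_f(G) such that g(v) ≤ 1/k for every vertex v of G, then dim_f^k(G) = k·dim_f(G). -/
/-! Multiplying by `k` turns the minimum resolving function `g` into a `k`-resolving function
(this is where `g ≤ 1/k` is needed), so `dim_f^k ≤ k · dim_f`; conversely, dividing any
`k`-resolving function by `k ≥ 1` gives a resolving function, so `dim_f ≤ dim_f^k / k`. -/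

open Finset

namespace FracDim

variable {V : Type*}

/-- `R{x,y}`: the set of vertices `z` with `d(x,z) ≠ d(y,z)`. -/
noncomputable def resSet [Fintype V] (G : SimpleGraph V) (x y : V) : Finset V :=
  Finset.univ.filter (fun z => G.dist x z ≠ G.dist y z)

/-- `κ(G) = min { |R{x,y}| : x ≠ y }`. -/
noncomputable def kappa [Fintype V] (G : SimpleGraph V) : ℕ :=
  sInf {n : ℕ | ∃ x y : V, x ≠ y ∧ (resSet G x y).card = n}

/-- A `k`-resolving function: `g : V → [0,1]` with `g(R{x,y}) ≥ k` for all distinct `x, y`. -/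
def IsKResolving [Fintype V] (G : SimpleGraph V) (k : ℝ) (g : V → ℝ) : Prop :=
  (∀ v, 0 ≤ g v ∧ g v ≤ 1) ∧
    ∀ x y : V, x ≠ y → k ≤ ∑ z ∈ resSet G x y, g z

/-- The fractional `k`-metric dimension of `G`. -/
noncomputable def fracKDim [Fintype V] (G : SimpleGraph V) (k : ℝ) : ℝ :=
  sInf {s : ℝ | ∃ g : V → ℝ, IsKResolving G k g ∧ s = ∑ v, g v}

/-- The fractional metric dimension of `G`. -/
noncomputable def fracDim [Fintype V] (G : SimpleGraph V) : ℝ :=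
  fracKDim G 1

variable [Fintype V] {G : SimpleGraph V} {k c : ℝ} {g : V → ℝ}

theorem IsKResolving.const_mul (hg : IsKResolving G k g) (hc : 0 ≤ c)
    (hle : ∀ v, c * g v ≤ 1) : IsKResolving G (c * k) (fun v => c * g v) :=
  ⟨fun v => ⟨mul_nonneg hc (hg.1 v).1, hle v⟩, fun x y hxy => by
    rw [← mul_sum]
    exact mul_le_mul_of_nonneg_left (hg.2 x y hxy) hc⟩

theorem IsKResolving.sum_nonneg (hg : IsKResolving G k g) : 0 ≤ ∑ v, g v :=
  Finset.sum_nonneg fun v _ => (hg.1 v).1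

theorem fracKDim_le_sum (hg : IsKResolving G k g) : fracKDim G k ≤ ∑ v, g v :=
  csInf_le ⟨0, by rintro s ⟨h, hh, rfl⟩; exact hh.sum_nonneg⟩ ⟨g, hg, rfl⟩

theorem fracKDim_mul_le (hg : IsKResolving G k g) (hc0 : 0 < c) (hc1 : c ≤ 1) :
    fracKDim G (c * k) ≤ c * fracKDim G k := by
  rw [← div_le_iff₀' hc0]
  refine le_csInf ⟨_, g, hg, rfl⟩ ?_
  rintro s ⟨h, hh, rfl⟩
  have hscaled := hh.const_mul hc0.le fun v => mul_le_one₀ hc1 (hh.1 v).1 (hh.1 v).2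
  rw [div_le_iff₀' hc0, mul_sum]
  exact fracKDim_le_sum hscaled

end FracDim

open FracDim in
theorem fracKDim_eq_mul_of_minResolving_general {V : Type*} [Fintype V] (G : SimpleGraph V)
    (k : ℝ) (hk1 : 1 < k)
    (g : V → ℝ) (hg : IsKResolving G 1 g) (hmin : ∑ v, g v = fracDim G)
    (hle : ∀ v, g v ≤ 1 / k) :
    fracKDim G k = k * fracDim G := by
  have hk0 : 0 < k := one_pos.trans hk1
  have hkg : IsKResolving G k (fun v => k * g v) := by
    simpa using hg.const_mul hk0.le fun v => (le_div_iff₀' hk0).mp (hle v)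
  have hupper : fracKDim G k ≤ k * fracDim G := by
    simpa [← mul_sum, hmin] using fracKDim_le_sum hkg
  have hlower : fracDim G ≤ k⁻¹ * fracKDim G k := by
    simpa [fracDim, inv_mul_cancel₀ hk0.ne'] using
      fracKDim_mul_le hkg (inv_pos.mpr hk0) (inv_le_one_of_one_le₀ hk1.le)
  rw [inv_mul_eq_div, le_div_iff₀' hk0] at hlower
  exact hupper.antisymm hlower

open FracDim in
/-- If `1 < k ≤ κ(G)` and there is a minimum resolving function `g` of `G`
(i.e. a resolving function with `Σ g = dim_f(G)`) with `g(v) ≤ 1/k` for every vertex `v`,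
then `dim_f^k(G) = k · dim_f(G)`. -/
theorem fracKDim_eq_mul_of_minResolving {V : Type*} [Fintype V] (G : SimpleGraph V)
    (hG : G.Connected) (k : ℝ) (hk1 : 1 < k) (hk2 : k ≤ (kappa G : ℝ))
    (g : V → ℝ) (hg : IsKResolving G 1 g) (hmin : ∑ v, g v = fracDim G)
    (hle : ∀ v, g v ≤ 1 / k) :
    fracKDim G k = k * fracDim G :=
  fracKDim_eq_mul_of_minResolving_general G k hk1 g hg hmin hle
end

section
/- Let G be a finite simple connected graph of order n ≥ 2, write κ = κ(G), and let R_κ(G) denote the union of the sets R{x,y} over all pairs of distinct vertices x,y with |R{x,y}| = κ. For a real number k with 1 ≤ k ≤ κ, one has dim_f^k(G) = n if and only if k = κ and V(G) = R_κ(G). -/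
/-!
The constant function `1` is always `κ`-resolving, so `dim_f^k(G) ≤ n`. If `k < κ`, the constant
`k / κ` is already `k`-resolving. If `k = κ` and some vertex `v` lies in no minimal set `R{x,y}`,
then every `R{x,y}` containing `v` has at least `κ + 1` elements, so the indicator of `V ∖ {v}`
is `κ`-resolving. Conversely, if every vertex lies in some `R{x,y}` of size `κ`, a `κ`-resolving
function, being at most `1` and summing to at least `|R{x,y}|` there, equals `1` at every vertex.
-/

open Finset

namespace FracDim

variable {V : Type*} [Fintype V] (G : SimpleGraph V)

def resKappa : Set V :=
  ⋃ (x : V) (y : V) (_ : x ≠ y) (_ : (resSet G x y).card = kappa G), (↑(resSet G x y) : Set V)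

theorem mem_resKappa {v : V} :
    v ∈ resKappa G ↔ ∃ x y, x ≠ y ∧ (resSet G x y).card = kappa G ∧ v ∈ resSet G x y := by
  simp only [resKappa, Set.mem_iUnion, Finset.mem_coe, exists_prop]

theorem kappa_le_card_resSet {x y : V} (hxy : x ≠ y) : kappa G ≤ (resSet G x y).card :=
  Nat.sInf_le ⟨x, y, hxy, rfl⟩

theorem nonempty_of_kappa_pos (h : 0 < kappa G) : Nonempty V :=
  let ⟨_, x, _, _, _⟩ := Nat.nonempty_of_pos_sInf h
  ⟨x⟩

variable {G}

theorem fracKDim_le {k : ℝ} {g : V → ℝ} (hg : IsKResolving G k g) : fracKDim G k ≤ ∑ v, g v := by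
  refine csInf_le ⟨0, ?_⟩ ⟨g, hg, rfl⟩
  rintro s ⟨g, hg, rfl⟩
  exact Finset.sum_nonneg fun v _ => (hg.1 v).1

theorem isKResolving_const {k c : ℝ} (hc0 : 0 ≤ c) (hc1 : c ≤ 1) (hk : k ≤ kappa G * c) :
    IsKResolving G k (fun _ => c) := by
  refine ⟨fun _ => ⟨hc0, hc1⟩, fun x y hxy => ?_⟩
  rw [Finset.sum_const, nsmul_eq_mul]
  have hκ : (kappa G : ℝ) ≤ (resSet G x y).card := by exact_mod_cast kappa_le_card_resSet G hxy
  nlinarith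

theorem isKResolving_one {k : ℝ} (hk : k ≤ kappa G) : IsKResolving G k 1 :=
  isKResolving_const (c := 1) zero_le_one le_rfl (by rwa [mul_one])

theorem fracKDim_le_card {k : ℝ} (hk : k ≤ kappa G) : fracKDim G k ≤ Fintype.card V := by
  simpa using fracKDim_le (isKResolving_one hk)

theorem fracKDim_lt_card_of_lt_kappa {k : ℝ} (hk0 : 0 ≤ k) (hk : k < kappa G) :
    fracKDim G k < Fintype.card V := by
  have hκ : (0 : ℝ) < kappa G := hk0.trans_lt hk
  have : Nonempty V := nonempty_of_kappa_pos G (by exact_mod_cast hκ)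
  have hres : IsKResolving G k (fun _ => k / kappa G) :=
    isKResolving_const (by positivity) (div_le_one_of_le₀ hk.le hκ.le)
      (by rw [mul_div_cancel₀ _ hκ.ne'])
  calc fracKDim G k ≤ Fintype.card V * (k / kappa G) := by simpa using fracKDim_le hres
    _ < Fintype.card V * 1 := by gcongr; exact (div_lt_one hκ).2 hk
    _ = Fintype.card V := mul_one _

theorem isKResolving_update_zero [DecidableEq V] {k : ℝ} (hk : k ≤ kappa G) {v : V}
    (hv : v ∉ resKappa G) : IsKResolving G k (Function.update 1 v 0) := by
  refine ⟨fun w => ?_, fun x y hxy => ?_⟩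
  · by_cases hw : w = v <;> simp [hw]
  have hκ := kappa_le_card_resSet G hxy
  by_cases hvR : v ∈ resSet G x y
  · have hcard : kappa G + 1 ≤ (resSet G x y).card :=
      hκ.lt_of_ne (fun h => hv ((mem_resKappa G).2 ⟨x, y, hxy, h.symm, hvR⟩))
    rw [Finset.sum_update_of_mem hvR]
    simp only [Pi.one_apply, Finset.sum_const, nsmul_eq_mul, mul_one, zero_add,
      Finset.card_sdiff_of_subset (Finset.singleton_subset_iff.2 hvR), Finset.card_singleton]
    exact hk.trans (by exact_mod_cast (by omega : kappa G ≤ (resSet G x y).card - 1))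
  · rw [Finset.sum_update_of_notMem hvR]
    simp only [Pi.one_apply, Finset.sum_const, nsmul_eq_mul, mul_one]
    exact hk.trans (by exact_mod_cast hκ)

theorem fracKDim_lt_card_of_notMem_resKappa {k : ℝ} (hk : k ≤ kappa G) {v : V}
    (hv : v ∉ resKappa G) : fracKDim G k < Fintype.card V := by
  classical
  calc fracKDim G k ≤ ∑ z, Function.update (1 : V → ℝ) v 0 z :=
        fracKDim_le (isKResolving_update_zero hk hv)
    _ = Fintype.card V - 1 := by
        rw [Finset.sum_update_of_mem (Finset.mem_univ v)]
        simp [Finset.card_sdiff_of_subset, Nat.cast_sub (Fintype.card_pos_iff.2 ⟨v⟩)]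
    _ < Fintype.card V := sub_one_lt _

theorem IsKResolving.eq_one_of_mem_resKappa {g : V → ℝ} (hg : IsKResolving G (kappa G) g)
    {v : V} (hv : v ∈ resKappa G) : g v = 1 := by
  obtain ⟨x, y, hxy, hcard, hvxy⟩ := (mem_resKappa G).1 hv
  refine le_antisymm (hg.1 v).2 (not_lt.1 fun hlt => ?_)
  have : ∑ z ∈ resSet G x y, g z < ∑ z ∈ resSet G x y, 1 :=
    Finset.sum_lt_sum (fun z _ => (hg.1 z).2) ⟨v, hvxy, hlt⟩
  have := hg.2 x y hxy
  simp only [Finset.sum_const, nsmul_eq_mul, mul_one, hcard] at *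
  linarith

theorem card_le_fracKDim_kappa (hU : resKappa G = Set.univ) :
    (Fintype.card V : ℝ) ≤ fracKDim G (kappa G) := by
  refine le_csInf ⟨_, 1, isKResolving_one le_rfl, rfl⟩ ?_
  rintro s ⟨g, hg, rfl⟩
  have hg1 : ∀ v, g v = 1 := fun v => hg.eq_one_of_mem_resKappa (hU ▸ Set.mem_univ v)
  simp [hg1]

end FracDim

open FracDim in
theorem fracKDim_eq_card_iff_general {V : Type*} [Fintype V] (G : SimpleGraph V)
    (k : ℝ) (hk1 : 1 ≤ k) (hk2 : k ≤ (kappa G : ℝ)) :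
    fracKDim G k = (Fintype.card V : ℝ) ↔
      (k = (kappa G : ℝ) ∧
        (⋃ (x : V) (y : V) (_ : x ≠ y) (_ : (resSet G x y).card = kappa G),
          (↑(resSet G x y) : Set V)) = Set.univ) := by
  change _ ↔ k = kappa G ∧ resKappa G = Set.univ
  constructor
  · intro hdim
    by_contra hcon
    refine hdim.not_lt ?_
    rcases hk2.lt_or_eq with hlt | rfl
    · exact fracKDim_lt_card_of_lt_kappa (zero_le_one.trans hk1) hlt
    · obtain ⟨v, hv⟩ := (Set.ne_univ_iff_exists_notMem _).1 fun hU => hcon ⟨rfl, hU⟩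
      exact fracKDim_lt_card_of_notMem_resKappa le_rfl hv
  · rintro ⟨rfl, hU⟩
    exact (fracKDim_le_card le_rfl).antisymm (card_le_fracKDim_kappa hU)

open FracDim in
/-- For a finite simple connected graph `G` of order `n ≥ 2`, writing `κ = κ(G)` and
`R_κ(G)` for the union of the sets `R{x,y}` over distinct pairs with `|R{x,y}| = κ`,
and for a real `k` with `1 ≤ k ≤ κ`: `dim_f^k(G) = n` iff `k = κ` and `V(G) = R_κ(G)`. -/
theorem fracKDim_eq_card_iff {V : Type*} [Fintype V] (G : SimpleGraph V) (hG : G.Connected)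
    (hn : 2 ≤ Fintype.card V) (k : ℝ) (hk1 : 1 ≤ k) (hk2 : k ≤ (kappa G : ℝ)) :
    fracKDim G k = (Fintype.card V : ℝ) ↔
      (k = (kappa G : ℝ) ∧
        (⋃ (x : V) (y : V) (_ : x ≠ y) (_ : (resSet G x y).card = kappa G),
          (↑(resSet G x y) : Set V)) = Set.univ) :=
  fracKDim_eq_card_iff_general G k hk1 hk2
end

section
/- Let P_n be the path on n ≥ 2 vertices. Then κ(P_2) = 2 and κ(P_n) = n − 1 for n ≥ 3, and for every real number k with 1 ≤ k ≤ 2 (and k ≤ κ(P_n)), dim_f^k(P_n) = k. -/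
open Finset

/-!
Every vertex `z` off the "midpoint" of `x` and `y` distinguishes them, since `d(x,z) = |x - z|`
on a path; so `|R{x,y}| ≥ n - 1`, with equality for `x, y = 0, 2`. Both endpoints of the path lie
in every `R{x,y}`, so giving each of them weight `k/2` is `k`-resolving, while any `k`-resolving
function already has total weight at least `k` on a single set `R{x,y}`.
-/

open SimpleGraph

namespace FracDim

variable {V : Type*} [Fintype V] {G : SimpleGraph V}

theorem mem_resSet {x y z : V} : z ∈ resSet G x y ↔ G.dist x z ≠ G.dist y z := by
  simp [resSet]

theorem kappa_eq {m : ℕ} (hle : ∀ x y, x ≠ y → m ≤ #(resSet G x y)) {x y : V} (hxy : x ≠ y)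
    (hm : #(resSet G x y) = m) : kappa G = m :=
  IsLeast.csInf_eq ⟨⟨x, y, hxy, hm⟩, by rintro _ ⟨x, y, hxy, rfl⟩; exact hle x y hxy⟩

theorem _root_.SimpleGraph.Preconnected.two_le_card_resSet (hG : G.Preconnected) {x y : V}
    (hxy : x ≠ y) : 2 ≤ #(resSet G x y) := by
  have hpos : 0 < G.dist x y := (hG x y).pos_dist_of_ne hxy
  refine one_lt_card.mpr ⟨x, ?_, y, ?_, hxy⟩
  · rw [mem_resSet, dist_self, dist_comm]; omega
  · rw [mem_resSet, dist_self]; omega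

theorem IsKResolving.le_sum {k : ℝ} {g : V → ℝ} (hg : IsKResolving G k g) {x y : V}
    (hxy : x ≠ y) : k ≤ ∑ v, g v :=
  (hg.2 x y hxy).trans <| sum_le_sum_of_subset_of_nonneg (subset_univ _) fun v _ _ ↦ (hg.1 v).1

theorem _root_.Finset.sum_ite_mem_of_subset {α : Type*} [DecidableEq α] {S T : Finset α}
    (hST : S ⊆ T) (c : ℝ) :
    ∑ v ∈ T, (if v ∈ S then c else 0) = #S * c := by
  rw [sum_ite_mem, inter_eq_right.mpr hST, sum_const, nsmul_eq_mul]

section UniformWeight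

variable [DecidableEq V] {S : Finset V} {k : ℝ}

theorem isKResolving_ite_mem (hS : ∀ x y, x ≠ y → S ⊆ resSet G x y) (hk : 0 < k)
    (hkS : k ≤ #S) : IsKResolving G k (fun v ↦ if v ∈ S then k / #S else 0) := by
  have hS0 : (0 : ℝ) < #S := hk.trans_le hkS
  refine ⟨fun v ↦ ?_, fun x y hxy ↦ ?_⟩
  · dsimp only
    split_ifs
    · exact ⟨by positivity, div_le_one_of_le₀ hkS hS0.le⟩
    · exact ⟨le_rfl, zero_le_one⟩
  · rw [sum_ite_mem_of_subset (hS x y hxy), mul_div_cancel₀ _ hS0.ne']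

theorem fracKDim_eq_self (hS : ∀ x y, x ≠ y → S ⊆ resSet G x y) (hk : 0 < k) (hkS : k ≤ #S)
    {x y : V} (hxy : x ≠ y) : fracKDim G k = k := by
  have hS0 : (#S : ℝ) ≠ 0 := (hk.trans_le hkS).ne'
  refine IsLeast.csInf_eq ⟨⟨_, isKResolving_ite_mem hS hk hkS, ?_⟩, ?_⟩
  · rw [sum_ite_mem_of_subset (subset_univ S), mul_div_cancel₀ _ hS0]
  · rintro _ ⟨g, hg, rfl⟩
    exact hg.le_sum hxy

end UniformWeight

end FracDim

namespace SimpleGraph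

variable {n : ℕ}

theorem pathGraph_natDist_le_length {x y : Fin n} (p : (pathGraph n).Walk x y) :
    Nat.dist x y ≤ p.length := by
  induction p with
  | nil => simp
  | cons h p ih =>
    rw [Walk.length_cons]
    rcases pathGraph_adj.mp h with h | h <;> simp only [Nat.dist] at ih ⊢ <;> omega

theorem pathGraph_exists_walk_length {x y : Fin n} (hxy : x ≤ y) :
    ∃ p : (pathGraph n).Walk x y, p.length = y - x := by
  obtain ⟨d, hd⟩ : ∃ d, (y : ℕ) - x = d := ⟨_, rfl⟩
  induction d generalizing x with
  | zero =>
    obtain rfl : x = y := le_antisymm hxy (Fin.le_def.mpr (by omega))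
    exact ⟨Walk.nil, by simp⟩
  | succ d ih =>
    let x' : Fin n := ⟨x + 1, by omega⟩
    obtain ⟨p, hp⟩ := ih (x := x') (Fin.le_def.mpr (by simp [x']; omega)) (by simp [x']; omega)
    exact ⟨.cons (pathGraph_adj.mpr (.inl rfl)) p, by simp [hp, x']; omega⟩

theorem pathGraph_dist (x y : Fin n) : (pathGraph n).dist x y = Nat.dist x y := by
  refine le_antisymm ?_ ?_
  · wlog hxy : x ≤ y generalizing x y
    · rw [dist_comm, Nat.dist_comm]
      exact this y x (le_of_not_ge hxy)
    obtain ⟨p, hp⟩ := pathGraph_exists_walk_length hxy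
    rw [Nat.dist_eq_sub_of_le hxy, ← hp]
    exact dist_le p
  · obtain ⟨q, hq⟩ := (pathGraph_preconnected n x y).exists_walk_length_eq_dist
    exact hq ▸ pathGraph_natDist_le_length q

end SimpleGraph

namespace FracDim

variable {n : ℕ}

theorem mem_resSet_pathGraph {x y z : Fin n} (hxy : x ≠ y) :
    z ∈ resSet (pathGraph n) x y ↔ (x : ℕ) + y ≠ 2 * z := by
  have := Fin.val_ne_of_ne hxy
  rw [mem_resSet, pathGraph_dist, pathGraph_dist, Nat.dist, Nat.dist]
  omega

theorem sub_one_le_card_resSet_pathGraph {x y : Fin n} (hxy : x ≠ y) :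
    n - 1 ≤ #(resSet (pathGraph n) x y) := by
  have hcompl : #(resSet (pathGraph n) x y)ᶜ ≤ 1 := by
    refine card_le_one.mpr fun a ha b hb ↦ ?_
    rw [mem_compl, mem_resSet_pathGraph hxy, not_not] at ha hb
    exact Fin.ext (by omega)
  rw [card_compl, Fintype.card_fin] at hcompl
  omega

theorem kappa_pathGraph_two : kappa (pathGraph 2) = 2 := by
  refine kappa_eq (fun x y ↦ (pathGraph_preconnected 2).two_le_card_resSet) (x := 0) (y := 1)
    (by decide) (le_antisymm ?_ ((pathGraph_preconnected 2).two_le_card_resSet (by decide)))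
  simpa using card_le_univ (resSet (pathGraph 2) 0 1)

theorem kappa_pathGraph (hn : 3 ≤ n) : kappa (pathGraph n) = n - 1 := by
  have h02 : (⟨0, by omega⟩ : Fin n) ≠ ⟨2, by omega⟩ := by simp
  refine kappa_eq (fun x y ↦ sub_one_le_card_resSet_pathGraph) h02
    (le_antisymm ?_ (sub_one_le_card_resSet_pathGraph h02))
  have hsub : resSet (pathGraph n) ⟨0, by omega⟩ ⟨2, by omega⟩ ⊆ univ.erase ⟨1, by omega⟩ :=
    fun z hz ↦ mem_erase.mpr ⟨fun h ↦ (mem_resSet_pathGraph h02).mp (h ▸ hz) rfl, mem_univ z⟩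
  simpa using card_le_card hsub

theorem fracKDim_pathGraph (hn : 2 ≤ n) {k : ℝ} (hk1 : 1 ≤ k) (hk2 : k ≤ 2) :
    fracKDim (pathGraph n) k = k := by
  have hends : (⟨0, by omega⟩ : Fin n) ≠ ⟨n - 1, by omega⟩ := by simp; omega
  refine fracKDim_eq_self (S := {⟨0, by omega⟩, ⟨n - 1, by omega⟩}) (fun x y hxy z hz ↦ ?_)
    (by linarith) (by simpa [card_pair hends]) hends
  have := Fin.val_ne_of_ne hxy
  have := x.isLt
  have := y.isLt
  rw [mem_resSet_pathGraph hxy]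
  rcases mem_insert.mp hz with rfl | hz
  · dsimp only; omega
  · rw [mem_singleton.mp hz]; dsimp only; omega

end FracDim

open FracDim in
/-- For the path `P_n` on `n ≥ 2` vertices: `κ(P₂) = 2`, `κ(P_n) = n - 1` for `n ≥ 3`,
and for every real `k` with `1 ≤ k ≤ 2` (and `k ≤ κ(P_n)`), `dim_f^k(P_n) = k`. -/
theorem fracKDim_path_small_k (n : ℕ) (hn : 2 ≤ n) :
    kappa (SimpleGraph.pathGraph 2) = 2 ∧
      (3 ≤ n → kappa (SimpleGraph.pathGraph n) = n - 1) ∧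
      (∀ k : ℝ, 1 ≤ k → k ≤ 2 → k ≤ (kappa (SimpleGraph.pathGraph n) : ℝ) →
        fracKDim (SimpleGraph.pathGraph n) k = k) :=
  ⟨kappa_pathGraph_two, kappa_pathGraph, fun _ hk1 hk2 _ ↦ fracKDim_pathGraph hn hk1 hk2⟩
end
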